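/- For every real t with 0 < t < 2, set z² := 2t²/(2−t) (i.e. z = t(1 − t/2)^{−1/2}). Then: (i) 3t + 2S₃(t) + S_{1,3}(t) = −z², i.e. with the uncorrected choice R₃ = t the constraint 3R₃ + 2S₃ + S_{1,3} = 0 fails by exactly −z²; and (ii) t(6−t)/(3(2−t)) = t + z²/3, i.e. the corrected function R₃ differs from t by exactly z²/3. -/
import Mathlib


/-! Göttsche–Kool universal functions of a real variable `t`, with all square
roots the nonnegative real square roots.  The `t`-suffixed versions
(`gkYt`, `gkZt`, `gkSt`) are the sign-flipped functions obtained by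
replacing `√t` with `−√t`. -/

noncomputable def gkY1 (t : ℝ) : ℝ := (1 + t) + Real.sqrt t * Real.sqrt (1 + 3*t/4)
noncomputable def gkYt1 (t : ℝ) : ℝ := (1 + t) - Real.sqrt t * Real.sqrt (1 + 3*t/4)
noncomputable def gkY2 (t : ℝ) : ℝ := Real.sqrt t + Real.sqrt (1 + t)
noncomputable def gkYt2 (t : ℝ) : ℝ := -Real.sqrt t + Real.sqrt (1 + t)
noncomputable def gkY3 (t : ℝ) : ℝ := 1 + Real.sqrt t * Real.sqrt (1 - t/4)
noncomputable def gkYt3 (t : ℝ) : ℝ := 1 - Real.sqrt t * Real.sqrt (1 - t/4)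
noncomputable def gkZ1 (t : ℝ) : ℝ :=
  (1 + 3*t/4 - (1/2) * Real.sqrt t * Real.sqrt (1 + 3*t/4)) / (1 + t/2)
noncomputable def gkZt1 (t : ℝ) : ℝ :=
  (1 + 3*t/4 + (1/2) * Real.sqrt t * Real.sqrt (1 + 3*t/4)) / (1 + t/2)
noncomputable def gkZ2 (t : ℝ) : ℝ := 1 + t - Real.sqrt t * Real.sqrt (1 + t)
noncomputable def gkZt2 (t : ℝ) : ℝ := 1 + t + Real.sqrt t * Real.sqrt (1 + t)
noncomputable def gkZ3 (t : ℝ) : ℝ :=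
  (1 + t/2) * ((1 - t/4)*(1 + t/2)
    - (3/2) * Real.sqrt t * Real.sqrt (1 - t/4) * (1 - t/6)) / (1 - t/2)^3
noncomputable def gkZt3 (t : ℝ) : ℝ :=
  (1 + t/2) * ((1 - t/4)*(1 + t/2)
    + (3/2) * Real.sqrt t * Real.sqrt (1 - t/4) * (1 - t/6)) / (1 - t/2)^3
noncomputable def gkS1 (t : ℝ) : ℝ := -t/2 + Real.sqrt t * Real.sqrt (1 + 3*t/4)
noncomputable def gkSt1 (t : ℝ) : ℝ := -t/2 - Real.sqrt t * Real.sqrt (1 + 3*t/4)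
noncomputable def gkS2 (t : ℝ) : ℝ := -t + Real.sqrt t * Real.sqrt (1 + t)
noncomputable def gkSt2 (t : ℝ) : ℝ := -t - Real.sqrt t * Real.sqrt (1 + t)
noncomputable def gkS3 (t : ℝ) : ℝ :=
  (-(3/2)*t*(1 - t/6) + Real.sqrt t * Real.sqrt (1 - t/4) * (1 + t/2)) / (1 - t/2)
noncomputable def gkSt3 (t : ℝ) : ℝ :=
  (-(3/2)*t*(1 - t/6) - Real.sqrt t * Real.sqrt (1 - t/4) * (1 + t/2)) / (1 - t/2)
noncomputable def gkV2 (t : ℝ) : ℝ := (1 + t)^2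
noncomputable def gkV3 (t : ℝ) : ℝ := (1 + t/2)^3 / (1 - t/2)
noncomputable def gkW1 (t : ℝ) : ℝ := (1 + t/2)⁻¹
noncomputable def gkW2 (t : ℝ) : ℝ := (Real.sqrt (1 + t))⁻¹
noncomputable def gkW3 (t : ℝ) : ℝ := 2 / (2 + t)
noncomputable def gkX1 (t : ℝ) : ℝ :=
  (1 + t/2) ^ (-(3:ℝ)/4) * (1 + 3*t/4) ^ (-(1:ℝ)/2)
noncomputable def gkX2 (t : ℝ) : ℝ := (1 + t) ^ (-(3:ℝ)/2)
noncomputable def gkX3 (t : ℝ) : ℝ :=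
  (1 - t/2) ^ ((3:ℝ)/4) * (1 - t/4) ^ (-(1:ℝ)/2) * (1 + t/2) ^ (-(4:ℝ))

/-- for `0 < t < 2`, with `z² = 2t²/(2−t)` and
`S_{1,3} = S̃₃ − S₃`: (i) `3t + 2S₃ + S_{1,3} = −z²`, so with the
uncorrected `R₃ = t` the constraint fails by exactly `−z²`; and
(ii) `t(6−t)/(3(2−t)) = t + z²/3`. -/
theorem stmt_13 (t zSq : ℝ) (ht0 : 0 < t) (ht2 : t < 2)
    (hzSq : zSq = 2*t^2/(2 - t)) :
    3*t + 2*gkS3 t + (gkSt3 t - gkS3 t) = -zSq ∧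
    t*(6 - t)/(3*(2 - t)) = t + zSq/3 := by
  have h2 : (2:ℝ) - t ≠ 0 := by linarith
  have h1 : (1:ℝ) - t/2 ≠ 0 := by intro h; apply h2; linarith
  constructor
  · unfold gkS3 gkSt3
    rw [hzSq]; field_simp; ring
  · rw [hzSq]; field_simp; ring
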